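/- arXiv:1605.04766 — 4 statements merged into one kernel-verified Lean document; each statement's English description precedes it below -/
import Mathlib

section
/- Let E be a countable set, let ν : E → [0,∞) satisfy 0 < ν(E) := ∑_{x∈E} ν(x) ≤ 1, and let P : E×E → [0,∞) be symmetric (P(x,y) = P(y,x)) with ∑_{y∈E} P(x,y) ≤ 1 for every x ∈ E. Let F ⊆ E, let δ ∈ [0,1] be defined by ν(F) = (1−δ)·ν(E), and let η ≥ 0 satisfy ∑_{y∈F} P(x,y) ≤ η for every x ∈ F. Then ∑_{x,y∈E} √(ν(x))·√(ν(y))·P(x,y) ≤ ν(E)·(η + 2√δ). -/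
open scoped ENNReal

/-!
Split `E × E` into the blocks `F × F`, `F × Fᶜ` and `Fᶜ × E`. On a block `A × B` whose row and
column sums of `P` are at most `a` and `b`, Cauchy–Schwarz applied to the factorisation
`√(ν x P x y) · √(ν y P x y)` (the Schur test) bounds the sum by `√(a ν(A)) · √(b ν(B))`.
On `F × F` both bounds are `η`; on the two other blocks they are `1` (columns by symmetry of `P`),
and one side is `Fᶜ`, of mass at most `δ ν(E)`.
-/

namespace ENNReal

variable {ι α β : Type*}

theorem inner_le_Lp_mul_Lq_tsum (f g : ι → ℝ≥0∞) {p q : ℝ} (hpq : p.HolderConjugate q) :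
    ∑' i, f i * g i ≤ (∑' i, f i ^ p) ^ (1 / p) * (∑' i, g i ^ q) ^ (1 / q) := by
  rw [ENNReal.tsum_eq_iSup_sum]
  refine iSup_le fun s => (inner_le_Lp_mul_Lq s f g hpq).trans ?_
  exact mul_le_mul' (rpow_le_rpow (ENNReal.sum_le_tsum s) (one_div_nonneg.2 hpq.nonneg))
    (rpow_le_rpow (ENNReal.sum_le_tsum s) (one_div_nonneg.2 hpq.symm.nonneg))

theorem rpow_half_mul_rpow_half_self (a : ℝ≥0∞) : a ^ (1 / 2 : ℝ) * a ^ (1 / 2 : ℝ) = a := by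
  rw [← rpow_add_of_nonneg _ _ (by norm_num) (by norm_num)]
  norm_num

theorem tsum_rpow_half_mul_rpow_half_le (f g : ι → ℝ≥0∞) :
    ∑' i, f i ^ (1 / 2 : ℝ) * g i ^ (1 / 2 : ℝ)
      ≤ (∑' i, f i) ^ (1 / 2 : ℝ) * (∑' i, g i) ^ (1 / 2 : ℝ) := by
  have h := inner_le_Lp_mul_Lq_tsum (fun i => f i ^ (1 / 2 : ℝ)) (fun i => g i ^ (1 / 2 : ℝ))
    Real.HolderConjugate.two_two
  simp only [← rpow_mul] at h
  norm_num at h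
  exact h

theorem rpow_half_mul_rpow_half_le {a b c d : ℝ≥0∞} (hac : a ≤ c) (hbd : b ≤ d * c) :
    a ^ (1 / 2 : ℝ) * b ^ (1 / 2 : ℝ) ≤ d ^ (1 / 2 : ℝ) * c := by
  calc a ^ (1 / 2 : ℝ) * b ^ (1 / 2 : ℝ)
      ≤ c ^ (1 / 2 : ℝ) * (d * c) ^ (1 / 2 : ℝ) := by gcongr
    _ = d ^ (1 / 2 : ℝ) * c := by
      rw [mul_rpow_of_nonneg _ _ (by norm_num), mul_left_comm, rpow_half_mul_rpow_half_self]

theorem schur_test (μ : α → ℝ≥0∞) (ν : β → ℝ≥0∞) (K : α → β → ℝ≥0∞) {a b : ℝ≥0∞}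
    (hrow : ∀ x, ∑' y, K x y ≤ a) (hcol : ∀ y, ∑' x, K x y ≤ b) :
    ∑' x, ∑' y, μ x ^ (1 / 2 : ℝ) * ν y ^ (1 / 2 : ℝ) * K x y
      ≤ (a * ∑' x, μ x) ^ (1 / 2 : ℝ) * (b * ∑' y, ν y) ^ (1 / 2 : ℝ) := by
  have hsplit : ∀ x y, μ x ^ (1 / 2 : ℝ) * ν y ^ (1 / 2 : ℝ) * K x y
      = (μ x * K x y) ^ (1 / 2 : ℝ) * (ν y * K x y) ^ (1 / 2 : ℝ) := fun x y => by
    simp only [mul_rpow_of_nonneg _ _ (by norm_num : (0 : ℝ) ≤ 1 / 2)]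
    conv_lhs => rw [← rpow_half_mul_rpow_half_self (K x y)]
    ring
  have hμ : ∑' x, ∑' y, μ x * K x y ≤ a * ∑' x, μ x := by
    calc ∑' x, ∑' y, μ x * K x y = ∑' x, μ x * ∑' y, K x y := by simp only [ENNReal.tsum_mul_left]
      _ ≤ ∑' x, μ x * a := by gcongr with x; exact hrow x
      _ = a * ∑' x, μ x := by rw [ENNReal.tsum_mul_right, mul_comm]
  have hν : ∑' x, ∑' y, ν y * K x y ≤ b * ∑' y, ν y := by
    rw [ENNReal.tsum_comm]
    calc ∑' y, ∑' x, ν y * K x y = ∑' y, ν y * ∑' x, K x y := by simp only [ENNReal.tsum_mul_left]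
      _ ≤ ∑' y, ν y * b := by gcongr with y; exact hcol y
      _ = b * ∑' y, ν y := by rw [ENNReal.tsum_mul_right, mul_comm]
  calc ∑' x, ∑' y, μ x ^ (1 / 2 : ℝ) * ν y ^ (1 / 2 : ℝ) * K x y
      = ∑' p : α × β, (μ p.1 * K p.1 p.2) ^ (1 / 2 : ℝ) * (ν p.2 * K p.1 p.2) ^ (1 / 2 : ℝ) := by
        rw [ENNReal.tsum_prod']; simp only [hsplit]
    _ ≤ (∑' p : α × β, μ p.1 * K p.1 p.2) ^ (1 / 2 : ℝ)
          * (∑' p : α × β, ν p.2 * K p.1 p.2) ^ (1 / 2 : ℝ) :=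
        tsum_rpow_half_mul_rpow_half_le _ _
    _ ≤ _ := by
        rw [ENNReal.tsum_prod', ENNReal.tsum_prod']
        gcongr

end ENNReal

theorem tsum_tsum_eq_add_add_compl {α : Type*} (f : α → α → ℝ≥0∞) (s : Set α) :
    ∑' x, ∑' y, f x y
      = ∑' x : s, ∑' y : s, f x y + ∑' x : s, ∑' y : (sᶜ : Set α), f x y
        + ∑' x : (sᶜ : Set α), ∑' y, f x y := by
  rw [← ENNReal.summable.tsum_add_tsum_compl ENNReal.summable (s := s)]
  congr 1
  rw [← ENNReal.tsum_add]
  exact tsum_congr fun x => (ENNReal.summable.tsum_add_tsum_compl ENNReal.summable).symm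

theorem tsum_compl_le_mul_of_tsum_eq {α : Type*} {ν : α → ℝ≥0∞} (hν : ∑' x, ν x ≠ ⊤)
    {s : Set α} {δ : ℝ≥0∞} (hs : ∑' x : s, ν x = (1 - δ) * ∑' x, ν x) :
    ∑' x : (sᶜ : Set α), ν x ≤ δ * ∑' x, ν x := by
  have hsplit := ENNReal.summable.tsum_add_tsum_compl ENNReal.summable (f := ν) (s := s)
  rw [hs] at hsplit
  calc ∑' x : (sᶜ : Set α), ν x ≤ ∑' x, ν x - (1 - δ) * ∑' x, ν x :=
        ENNReal.le_sub_of_add_le_left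
          (ENNReal.mul_ne_top (ENNReal.sub_ne_top ENNReal.one_ne_top) hν) hsplit.le
    _ = (1 - (1 - δ)) * ∑' x, ν x := by
        rw [ENNReal.sub_mul (a := 1) (b := 1 - δ) fun _ _ => hν, one_mul]
    _ ≤ δ * ∑' x, ν x := by gcongr; exact tsub_le_iff_right.2 le_add_tsub

theorem singularity_bound_general {E : Type*}
    (ν : E → ℝ≥0∞) (P : E → E → ℝ≥0∞)
    (hν_le : (∑' x, ν x) ≤ 1)
    (hP_symm : ∀ x y, P x y = P y x) (hP_row : ∀ x, (∑' y, P x y) ≤ 1)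
    (F : Set E) (δ : ℝ≥0∞)
    (hF : (∑' x : F, ν x) = (1 - δ) * ∑' x, ν x)
    (η : ℝ≥0∞) (hη : ∀ x ∈ F, (∑' y : F, P x y) ≤ η) :
    (∑' x, ∑' y, ν x ^ (1 / 2 : ℝ) * ν y ^ (1 / 2 : ℝ) * P x y)
      ≤ (∑' x, ν x) * (η + 2 * δ ^ (1 / 2 : ℝ)) := by
  set S := ∑' x, ν x
  have hsub : ∀ (A : Set E) (f : E → ℝ≥0∞), ∑' x : A, f x ≤ ∑' x, f x := fun A f =>
    ENNReal.tsum_comp_le_tsum_of_injective Subtype.val_injective f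
  have hrow : ∀ (B : Set E) x, ∑' y : B, P x y ≤ 1 := fun B x => (hsub B (P x)).trans (hP_row x)
  have hcol : ∀ (A : Set E) y, ∑' x : A, P x y ≤ 1 := fun A y => by
    simpa only [hP_symm _ y] using hrow A y
  have hFc : ∑' x : (Fᶜ : Set E), ν x ≤ δ * S :=
    tsum_compl_le_mul_of_tsum_eq (hν_le.trans_lt ENNReal.one_lt_top).ne hF
  have hFF : ∑' x : F, ∑' y : F, ν x ^ (1 / 2 : ℝ) * ν y ^ (1 / 2 : ℝ) * P x y ≤ η * S := by
    refine (ENNReal.schur_test (fun x : F => ν x) (fun y : F => ν y) (fun x y : F => P x y) (b := η)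
      (fun x => hη x x.2) (fun y => ?_)).trans ?_
    · simpa only [hP_symm _ y] using hη y y.2
    · rw [ENNReal.rpow_half_mul_rpow_half_self]
      gcongr
      exact hsub F ν
  have hFFc : ∑' x : F, ∑' y : (Fᶜ : Set E), ν x ^ (1 / 2 : ℝ) * ν y ^ (1 / 2 : ℝ) * P x y
      ≤ δ ^ (1 / 2 : ℝ) * S := by
    refine (ENNReal.schur_test (fun x : F => ν x) (fun y : (Fᶜ : Set E) => ν y)
      (fun x y => P x y) (fun x => hrow _ x) (fun y => hcol _ y)).trans ?_
    simp only [one_mul]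
    exact ENNReal.rpow_half_mul_rpow_half_le (hsub F ν) hFc
  have hFcE : ∑' x : (Fᶜ : Set E), ∑' y, ν x ^ (1 / 2 : ℝ) * ν y ^ (1 / 2 : ℝ) * P x y
      ≤ δ ^ (1 / 2 : ℝ) * S := by
    refine (ENNReal.schur_test (fun x : (Fᶜ : Set E) => ν x) ν
      (fun x y => P x y) (fun x => hP_row x) (fun y => hcol _ y)).trans ?_
    simp only [one_mul]
    rw [mul_comm]
    exact ENNReal.rpow_half_mul_rpow_half_le le_rfl hFc
  calc _ = _ := tsum_tsum_eq_add_add_compl _ F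
    _ ≤ η * S + δ ^ (1 / 2 : ℝ) * S + δ ^ (1 / 2 : ℝ) * S := by gcongr
    _ = S * (η + 2 * δ ^ (1 / 2 : ℝ)) := by ring

/-- **Lemma (singularity bound).**
Let `E` be a countable set endowed with a nonzero sub-probability measure `ν` and let
`P` be a symmetric sub-transition matrix on `E`.  Let `F ⊆ E`, let `δ ∈ [0,1]` be
defined by `ν(F) = (1-δ)·ν(E)`, and let `η` bound `∑_{y∈F} P(x,y)` for every `x ∈ F`.
Then `∑_{x,y∈E} √(ν(x))·√(ν(y))·P(x,y) ≤ ν(E)·(η + 2√δ)`.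
(All series have nonnegative terms and are interpreted in `[0,∞]`; square roots are
`(·)^(1/2)`.) -/
theorem singularity_bound {E : Type*} [Countable E]
    (ν : E → ℝ≥0∞) (P : E → E → ℝ≥0∞)
    (hν_pos : 0 < ∑' x, ν x) (hν_le : (∑' x, ν x) ≤ 1)
    (hP_symm : ∀ x y, P x y = P y x) (hP_row : ∀ x, (∑' y, P x y) ≤ 1)
    (F : Set E) (δ : ℝ≥0∞) (hδ_le : δ ≤ 1)
    (hF : (∑' x : F, ν x) = (1 - δ) * ∑' x, ν x)
    (η : ℝ≥0∞) (hη : ∀ x ∈ F, (∑' y : F, P x y) ≤ η) :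
    (∑' x, ∑' y, ν x ^ (1 / 2 : ℝ) * ν y ^ (1 / 2 : ℝ) * P x y)
      ≤ (∑' x, ν x) * (η + 2 * δ ^ (1 / 2 : ℝ)) :=
  singularity_bound_general ν P hν_le hP_symm hP_row F δ hF η hη
end

section
/- Let E be a countable set partitioned into pairwise disjoint subsets (E_k)_{k∈ℕ} with E = ⋃_k E_k, let ν : E → [0,∞) satisfy ∑_{x∈E} ν(x) ≤ 1, and let P : E×E → [0,∞) be symmetric with ∑_{y∈E} P(x,y) ≤ 1 for every x, and such that P(x,y) = 0 whenever x and y lie in different parts of the partition. For each k ∈ ℕ, let F_k ⊆ E_k, let δ_k ∈ [0,1] satisfy ν(E_k ∖ F_k) ≤ δ_k·ν(E_k), and let η_k ≥ 0 satisfy ∑_{y∈F_k} P(x,y) ≤ η_k for every x ∈ F_k. Then ∑_{x,y∈E} √(ν(x))·√(ν(y))·P(x,y) ≤ ∑_{k∈ℕ} ν(E_k)·(η_k + 2√(δ_k)). -/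
open scoped ENNReal

/-!
Split each block `E_k` into `F_k` and `G_k = E_k \ F_k`. Pairs inside `F_k` contribute at most
`η_k ν(E_k)`, by `2√a√b ≤ a + b` and the row-sum bound on `F_k`. By symmetry of `P`, the remaining
pairs contribute at most twice the pairing of `G_k` with `E_k`, and the weighted inequality
`2√a√b ≤ a/t + tb` with `t = √δ_k`, together with `ν(G_k) ≤ δ_k ν(E_k)` and the sub-stochasticity
of `P`, bounds that pairing by `√δ_k ν(E_k)`. As `P` does not connect different blocks, the whole
sum is the sum of the block contributions.
-/

namespace ENNReal

theorem two_mul_sqrt_mul_sqrt_le_add (a b : ℝ≥0∞) :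
    2 * (a ^ (1 / 2 : ℝ) * b ^ (1 / 2 : ℝ)) ≤ a + b := by
  have hsq : ∀ c : ℝ≥0∞, (c ^ (1 / 2 : ℝ)) ^ (2 : ℝ) = c := fun c => by
    rw [← ENNReal.rpow_mul]; norm_num
  have := young_inequality (a ^ (1 / 2 : ℝ)) (b ^ (1 / 2 : ℝ)) Real.HolderConjugate.two_two
  rw [hsq, hsq, ENNReal.ofReal_ofNat, ← ENNReal.add_div] at this
  calc 2 * (a ^ (1 / 2 : ℝ) * b ^ (1 / 2 : ℝ)) ≤ 2 * ((a + b) / 2) := by gcongr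
    _ = a + b := ENNReal.mul_div_cancel two_ne_zero ofNat_ne_top

theorem two_mul_sqrt_mul_sqrt_le_inv_mul_add_mul (a b : ℝ≥0∞) {t : ℝ≥0∞} (ht0 : t ≠ 0)
    (ht : t ≠ ⊤) : 2 * (a ^ (1 / 2 : ℝ) * b ^ (1 / 2 : ℝ)) ≤ t⁻¹ * a + t * b := by
  have hrescale : a ^ (1 / 2 : ℝ) * b ^ (1 / 2 : ℝ) =
      (t⁻¹ * a) ^ (1 / 2 : ℝ) * (t * b) ^ (1 / 2 : ℝ) := by
    rw [← mul_rpow_of_nonneg _ _ (by norm_num), ← mul_rpow_of_nonneg _ _ (by norm_num),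
      mul_mul_mul_comm, ENNReal.inv_mul_cancel ht0 ht, one_mul]
  rw [hrescale]
  exact two_mul_sqrt_mul_sqrt_le_add _ _

theorem tsum_subtype_eq_add_tsum_diff {α : Type*} {s t : Set α} (h : s ⊆ t) (f : α → ℝ≥0∞) :
    ∑' x : t, f x = ∑' x : s, f x + ∑' x : ↥(t \ s), f x := by
  rw [← ENNReal.summable.tsum_union_disjoint Set.disjoint_sdiff_right ENNReal.summable,
    Set.union_sdiff_cancel h]

theorem tsum_eq_tsum_tsum_of_partition {α ι : Type*} (A : ι → Set α)
    (hdisj : Pairwise (Function.onFun Disjoint A)) (hcover : ⋃ i, A i = Set.univ)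
    (f : α → ℝ≥0∞) : ∑' x, f x = ∑' i, ∑' x : A i, f x := by
  rw [← ENNReal.tsum_biUnion (hdisj.set_pairwise _), hcover, tsum_univ]

end ENNReal

section SqrtPairing

variable {E : Type*} (ν : E → ℝ≥0∞) (P : E → E → ℝ≥0∞)

noncomputable def sqrtPairing (A B : Set E) : ℝ≥0∞ :=
  ∑' x : A, ∑' y : B, ν x ^ (1 / 2 : ℝ) * ν y ^ (1 / 2 : ℝ) * P x y

variable {ν P}

theorem tsum_tsum_mul_le_of_rowSum_le {A B : Set E} {α : ℝ≥0∞} (w : E → ℝ≥0∞)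
    (hrow : ∀ x ∈ A, ∑' y : B, P x y ≤ α) :
    ∑' x : A, ∑' y : B, w x * P x y ≤ α * ∑' x : A, w x := by
  calc ∑' x : A, ∑' y : B, w x * P x y = ∑' x : A, w x * ∑' y : B, P x y :=
        tsum_congr fun x => ENNReal.tsum_mul_left
    _ ≤ ∑' x : A, w x * α := by gcongr with x; exact hrow x x.2
    _ = α * ∑' x : A, w x := by rw [ENNReal.tsum_mul_right, mul_comm]

theorem two_mul_sqrtPairing_le {A B : Set E} {α β t : ℝ≥0∞} (ht0 : t ≠ 0) (ht : t ≠ ⊤)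
    (hrow : ∀ x ∈ A, ∑' y : B, P x y ≤ α) (hcol : ∀ y ∈ B, ∑' x : A, P x y ≤ β) :
    2 * sqrtPairing ν P A B ≤ t⁻¹ * (α * ∑' x : A, ν x) + t * (β * ∑' y : B, ν y) := by
  have hA : ∑' x : A, ∑' y : B, t⁻¹ * ν x * P x y ≤ t⁻¹ * (α * ∑' x : A, ν x) := by
    simpa only [ENNReal.tsum_mul_left, mul_left_comm α] using
      tsum_tsum_mul_le_of_rowSum_le (fun x => t⁻¹ * ν x) hrow
  have hB : ∑' x : A, ∑' y : B, t * ν y * P x y ≤ t * (β * ∑' y : B, ν y) := by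
    simpa only [ENNReal.tsum_comm (α := A), ENNReal.tsum_mul_left, mul_left_comm β] using
      tsum_tsum_mul_le_of_rowSum_le (P := fun y x => P x y) (fun y => t * ν y) hcol
  calc 2 * sqrtPairing ν P A B
      = ∑' x : A, ∑' y : B, 2 * (ν x ^ (1 / 2 : ℝ) * ν y ^ (1 / 2 : ℝ)) * P x y := by
        simp only [sqrtPairing, ← ENNReal.tsum_mul_left, mul_assoc]
    _ ≤ ∑' x : A, ∑' y : B, (t⁻¹ * ν x + t * ν y) * P x y := by
        gcongr with x y
        exact ENNReal.two_mul_sqrt_mul_sqrt_le_inv_mul_add_mul _ _ ht0 ht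
    _ = ∑' x : A, ∑' y : B, t⁻¹ * ν x * P x y + ∑' x : A, ∑' y : B, t * ν y * P x y := by
        simp only [add_mul, ENNReal.tsum_add]
    _ ≤ _ := add_le_add hA hB

theorem sqrtPairing_comm (hsymm : ∀ x y, P x y = P y x) (A B : Set E) :
    sqrtPairing ν P A B = sqrtPairing ν P B A := by
  rw [sqrtPairing, sqrtPairing, ENNReal.tsum_comm]
  refine tsum_congr fun y => tsum_congr fun x => ?_
  rw [hsymm, mul_comm (ν x ^ (1 / 2 : ℝ))]

theorem sqrtPairing_mono_right (A : Set E) {B C : Set E} (h : B ⊆ C) :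
    sqrtPairing ν P A B ≤ sqrtPairing ν P A C :=
  ENNReal.tsum_le_tsum fun x =>
    ENNReal.tsum_mono_subtype (fun y => ν x ^ (1 / 2 : ℝ) * ν y ^ (1 / 2 : ℝ) * P x y) h

theorem sqrtPairing_eq_add_sdiff_left {F S : Set E} (h : F ⊆ S) (B : Set E) :
    sqrtPairing ν P S B = sqrtPairing ν P F B + sqrtPairing ν P (S \ F) B :=
  ENNReal.tsum_subtype_eq_add_tsum_diff h fun x =>
    ∑' y : B, ν x ^ (1 / 2 : ℝ) * ν y ^ (1 / 2 : ℝ) * P x y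

theorem sqrtPairing_le_of_rowSum_le (hsymm : ∀ x y, P x y = P y x) {A : Set E} {η : ℝ≥0∞}
    (hrow : ∀ x ∈ A, ∑' y : A, P x y ≤ η) : sqrtPairing ν P A A ≤ η * ∑' x : A, ν x := by
  have hcol : ∀ y ∈ A, ∑' x : A, P x y ≤ η := fun y hy => by
    simpa only [hsymm _ y] using hrow y hy
  have h := two_mul_sqrtPairing_le (ν := ν) one_ne_zero ENNReal.one_ne_top hrow hcol
  rw [inv_one, one_mul, ← two_mul] at h
  exact (ENNReal.mul_le_mul_iff_right two_ne_zero ENNReal.ofNat_ne_top).mp h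

theorem sqrtPairing_le_of_tsum_le_mul (hsymm : ∀ x y, P x y = P y x)
    (hrow : ∀ x, ∑' y, P x y ≤ 1) {G S : Set E} {δ : ℝ≥0∞} (hδ : δ ≠ ⊤)
    (hG : ∑' x : G, ν x ≤ δ * ∑' x : S, ν x) :
    sqrtPairing ν P G S ≤ δ ^ (1 / 2 : ℝ) * ∑' x : S, ν x := by
  rcases eq_or_ne δ 0 with rfl | hδ0
  · have hνG : ∀ x : G, ν x = 0 := ENNReal.tsum_eq_zero.mp (by simpa using hG)
    simp [sqrtPairing, hνG, ENNReal.zero_rpow_of_pos]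
  set t := δ ^ (1 / 2 : ℝ)
  have ht0 : t ≠ 0 := by simp [t, ENNReal.rpow_eq_zero_iff, hδ0, hδ]
  have ht : t ≠ ⊤ := by simp [t, ENNReal.rpow_eq_top_iff, hδ0, hδ]
  have htt : t * t = δ := by
    rw [← ENNReal.rpow_add _ _ hδ0 hδ]; norm_num
  have hrow' : ∀ x ∈ G, ∑' y : S, P x y ≤ 1 := fun x _ =>
    (ENNReal.tsum_comp_le_tsum_of_injective Subtype.val_injective _).trans (hrow x)
  have hcol : ∀ y ∈ S, ∑' x : G, P x y ≤ 1 := fun y _ => by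
    simpa only [hsymm _ y] using
      (ENNReal.tsum_comp_le_tsum_of_injective Subtype.val_injective _).trans (hrow y)
  have h := two_mul_sqrtPairing_le (ν := ν) ht0 ht hrow' hcol
  have hmass : t⁻¹ * ∑' x : G, ν x ≤ t * ∑' x : S, ν x := by
    calc t⁻¹ * ∑' x : G, ν x ≤ t⁻¹ * (t * t * ∑' x : S, ν x) := by
          rw [htt]; gcongr
      _ = t * ∑' x : S, ν x := by
          rw [mul_assoc, ← mul_assoc t⁻¹, ENNReal.inv_mul_cancel ht0 ht, one_mul]
  simp only [one_mul] at h
  refine (ENNReal.mul_le_mul_iff_right two_ne_zero ENNReal.ofNat_ne_top).mp ?_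
  rw [two_mul (t * _)]
  exact h.trans (add_le_add hmass le_rfl)

theorem sqrtPairing_self_le_of_sdiff (hsymm : ∀ x y, P x y = P y x)
    (hrow : ∀ x, ∑' y, P x y ≤ 1) {F S : Set E} (hFS : F ⊆ S) {δ η : ℝ≥0∞} (hδ : δ ≠ ⊤)
    (hmass : ∑' x : ↥(S \ F), ν x ≤ δ * ∑' x : S, ν x) (hη : ∀ x ∈ F, ∑' y : F, P x y ≤ η) :
    sqrtPairing ν P S S ≤ (∑' x : S, ν x) * (η + 2 * δ ^ (1 / 2 : ℝ)) := by
  have hGS := sqrtPairing_le_of_tsum_le_mul hsymm hrow hδ hmass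
  have hFF : sqrtPairing ν P F F ≤ η * ∑' x : S, ν x :=
    (sqrtPairing_le_of_rowSum_le hsymm hη).trans (by gcongr; exact ENNReal.tsum_mono_subtype _ hFS)
  have hFS' : sqrtPairing ν P F S ≤ sqrtPairing ν P F F + sqrtPairing ν P (S \ F) S := by
    rw [sqrtPairing_comm hsymm, sqrtPairing_eq_add_sdiff_left hFS, sqrtPairing_comm hsymm F]
    gcongr
    exact sqrtPairing_mono_right _ hFS
  calc sqrtPairing ν P S S = sqrtPairing ν P F S + sqrtPairing ν P (S \ F) S :=
        sqrtPairing_eq_add_sdiff_left hFS S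
    _ ≤ η * ∑' x : S, ν x + δ ^ (1 / 2 : ℝ) * ∑' x : S, ν x + δ ^ (1 / 2 : ℝ) * ∑' x : S, ν x := by
        grw [hFS', hFF, hGS]
    _ = (∑' x : S, ν x) * (η + 2 * δ ^ (1 / 2 : ℝ)) := by ring

end SqrtPairing

theorem singularity_bound_partitioned_general {E : Type*}
    (Epart : ℕ → Set E) (hdisj : Pairwise (Function.onFun Disjoint Epart))
    (hcover : (⋃ k, Epart k) = Set.univ)
    (ν : E → ℝ≥0∞)
    (P : E → E → ℝ≥0∞) (hP_symm : ∀ x y, P x y = P y x) (hP_row : ∀ x, (∑' y, P x y) ≤ 1)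
    (hP_offblock : ∀ k l : ℕ, k ≠ l → ∀ x ∈ Epart k, ∀ y ∈ Epart l, P x y = 0)
    (F : ℕ → Set E) (hF : ∀ k, F k ⊆ Epart k)
    (δ : ℕ → ℝ≥0∞) (hδ_le : ∀ k, δ k ≤ 1)
    (hδ : ∀ k, (∑' x : ↥(Epart k \ F k), ν x) ≤ δ k * ∑' x : ↥(Epart k), ν x)
    (η : ℕ → ℝ≥0∞) (hη : ∀ k, ∀ x ∈ F k, (∑' y : ↥(F k), P x y) ≤ η k) :
    (∑' x, ∑' y, ν x ^ (1 / 2 : ℝ) * ν y ^ (1 / 2 : ℝ) * P x y)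
      ≤ ∑' k : ℕ, (∑' x : ↥(Epart k), ν x) * (η k + 2 * δ k ^ (1 / 2 : ℝ)) := by
  have hP_block : ∀ k, ∀ x ∈ Epart k, ∀ y ∉ Epart k, P x y = 0 := by
    intro k x hx y hy
    obtain ⟨l, hl⟩ := Set.mem_iUnion.mp (hcover ▸ Set.mem_univ y)
    exact hP_offblock k l (fun hkl => hy (hkl ▸ hl)) x hx y hl
  calc (∑' x, ∑' y, ν x ^ (1 / 2 : ℝ) * ν y ^ (1 / 2 : ℝ) * P x y)
      = ∑' k, ∑' x : Epart k, ∑' y, ν x ^ (1 / 2 : ℝ) * ν y ^ (1 / 2 : ℝ) * P x y :=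
        ENNReal.tsum_eq_tsum_tsum_of_partition Epart hdisj hcover _
    _ = ∑' k, sqrtPairing ν P (Epart k) (Epart k) := by
        refine tsum_congr fun k => tsum_congr fun x =>
          (tsum_subtype_eq_of_support_subset fun y hy => ?_).symm
        by_contra hyk
        exact hy (by simp [hP_block k x x.2 y hyk])
    _ ≤ _ := ENNReal.tsum_le_tsum fun k =>
        sqrtPairing_self_le_of_sdiff hP_symm hP_row (hF k)
          ((hδ_le k).trans_lt ENNReal.one_lt_top).ne (hδ k) (hη k)

/-- **Lemma (singularity bound, partitioned form).**
Let `E` be a countable set partitioned into pairwise disjoint subsets `(E_k)_{k∈ℕ}`,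
let `ν` be a sub-probability measure on `E` and let `P` be a symmetric sub-transition
matrix on `E` vanishing off the diagonal blocks of the partition.  For each `k`, let
`F_k ⊆ E_k`, let `δ_k ∈ [0,1]` satisfy `ν(E_k \ F_k) ≤ δ_k·ν(E_k)`, and let `η_k`
bound `∑_{y∈F_k} P(x,y)` for every `x ∈ F_k`.  Then
`∑_{x,y∈E} √(ν(x))·√(ν(y))·P(x,y) ≤ ∑_k ν(E_k)·(η_k + 2√(δ_k))`.
(All series have nonnegative terms and are interpreted in `[0,∞]`.) -/
theorem singularity_bound_partitioned {E : Type*} [Countable E]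
    (Epart : ℕ → Set E) (hdisj : Pairwise (Function.onFun Disjoint Epart))
    (hcover : (⋃ k, Epart k) = Set.univ)
    (ν : E → ℝ≥0∞) (hν_le : (∑' x, ν x) ≤ 1)
    (P : E → E → ℝ≥0∞) (hP_symm : ∀ x y, P x y = P y x) (hP_row : ∀ x, (∑' y, P x y) ≤ 1)
    (hP_offblock : ∀ k l : ℕ, k ≠ l → ∀ x ∈ Epart k, ∀ y ∈ Epart l, P x y = 0)
    (F : ℕ → Set E) (hF : ∀ k, F k ⊆ Epart k)
    (δ : ℕ → ℝ≥0∞) (hδ_le : ∀ k, δ k ≤ 1)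
    (hδ : ∀ k, (∑' x : ↥(Epart k \ F k), ν x) ≤ δ k * ∑' x : ↥(Epart k), ν x)
    (η : ℕ → ℝ≥0∞) (hη : ∀ k, ∀ x ∈ F k, (∑' y : ↥(F k), P x y) ≤ η k) :
    (∑' x, ∑' y, ν x ^ (1 / 2 : ℝ) * ν y ^ (1 / 2 : ℝ) * P x y)
      ≤ ∑' k : ℕ, (∑' x : ↥(Epart k), ν x) * (η k + 2 * δ k ^ (1 / 2 : ℝ)) :=
  singularity_bound_partitioned_general Epart hdisj hcover ν P hP_symm hP_row hP_offblock F hF δ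
    hδ_le hδ η hη
end

section
/- Let E be a countable set and let μ be a probability measure on {−1,1}^E (with the product σ-algebra). Suppose there exists p₀ ∈ [0,1] such that for every n ≥ 0, all pairwise distinct e₁,…,e_{n+1} ∈ E and all i₁,…,i_n ∈ {−1,1}: μ[ω_{e₁}=i₁, …, ω_{e_n}=i_n] > 0 and μ[ω_{e_{n+1}}=1 | ω_{e₁}=i₁, …, ω_{e_n}=i_n] ≤ p₀. Then for every event A ⊆ {−1,1}^E that is increasing (i.e. ω ≤ ω′ coordinatewise and ω ∈ A imply ω′ ∈ A) and depends on only finitely many coordinates, μ[A] ≤ 𝐏_{p₀}[A], where 𝐏_{p₀} is the product measure under which each coordinate equals 1 with probability p₀ and −1 with probability 1−p₀, independently. -/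
open MeasureTheory

open Classical in
private lemma dom_aux {E : Type*} [DecidableEq E]
    (μ : Measure (E → Bool)) [IsProbabilityMeasure μ]
    (p₀ : ℝ) (hp₀ : 0 ≤ p₀) (hp₁ : p₀ ≤ 1)
    (hcond : ∀ (n : ℕ) (e : Fin (n + 1) → E), Function.Injective e →
      ∀ i : Fin n → Bool,
        μ {ω | ω (e (Fin.last n)) = true ∧ ∀ m : Fin n, ω (e m.castSucc) = i m} /
            μ {ω | ∀ m : Fin n, ω (e m.castSucc) = i m}
          ≤ ENNReal.ofReal p₀) :
    ∀ F : Finset E, ∀ A : Set (E → Bool),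
      (∀ ω ω' : E → Bool, (∀ e, ω e = true → ω' e = true) → ω ∈ A → ω' ∈ A) →
      (∀ ω ω' : E → Bool, (∀ e ∈ F, ω e = ω' e) → (ω ∈ A ↔ ω' ∈ A)) →
      ∀ (n : ℕ) (e : Fin n → E), Function.Injective e → (∀ m, e m ∉ F) →
      ∀ i : Fin n → Bool,
        (μ (A ∩ {ω | ∀ m : Fin n, ω (e m) = i m})).toReal ≤
          (μ {ω | ∀ m : Fin n, ω (e m) = i m}).toReal *
          ∑ G ∈ F.powerset,
            p₀ ^ G.card * (1 - p₀) ^ (F.card - G.card) *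
              (if (fun e => decide (e ∈ G)) ∈ A then (1 : ℝ) else 0) := by
  intro F
  induction F using Finset.induction_on with
  | empty =>
    intro A hA hdet n e hinj hnot i
    simp only [Finset.powerset_empty, Finset.sum_singleton, Finset.card_empty, pow_zero,
      one_mul, Nat.sub_zero]
    by_cases hmem : (fun e => decide (e ∈ (∅ : Finset E))) ∈ A
    · simp only [hmem, if_true, mul_one]
      exact ENNReal.toReal_mono (measure_ne_top μ _)
        (measure_mono Set.inter_subset_right)
    · have hAe : A ∩ {ω | ∀ m : Fin n, ω (e m) = i m} = ∅ := by
        ext ω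
        simp only [Set.mem_inter_iff, Set.mem_empty_iff_false, iff_false, not_and]
        intro hω _
        exact hmem ((hdet ω _ (by simp)).mp hω)
      rw [hAe]
      simp only [measure_empty, ENNReal.toReal_zero]
      split <;> simp
  | @insert e₀ F' he₀ ih =>
    intro A hA hdet n e hinj hnot i
    -- names
    set A1 : Set (E → Bool) := {ω | Function.update ω e₀ true ∈ A} with hA1def
    set A0 : Set (E → Bool) := {ω | Function.update ω e₀ false ∈ A} with hA0def
    set C : Set (E → Bool) := {ω | ∀ m : Fin n, ω (e m) = i m} with hCdef
    have he₀F : e₀ ∉ Set.range e := by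
      rintro ⟨m, rfl⟩; exact hnot m (Finset.mem_insert_self _ _)
    -- extended family
    have hinj' : Function.Injective (Fin.snoc e e₀ : Fin (n+1) → E) := by
      intro a b hab
      induction a using Fin.lastCases with
      | last =>
        induction b using Fin.lastCases with
        | last => rfl
        | cast b =>
          simp only [Fin.snoc_last, Fin.snoc_castSucc] at hab
          exact absurd ⟨b, hab.symm⟩ he₀F
      | cast a =>
        induction b using Fin.lastCases with
        | last =>
          simp only [Fin.snoc_last, Fin.snoc_castSucc] at hab
          exact absurd ⟨a, hab⟩ he₀F
        | cast b =>
          simp only [Fin.snoc_castSucc] at hab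
          exact congrArg Fin.castSucc (hinj hab)
    have hnot' : ∀ m : Fin (n+1), (Fin.snoc e e₀ : Fin (n+1) → E) m ∉ F' := by
      intro m
      induction m using Fin.lastCases with
      | last => simpa using he₀
      | cast m =>
        simp only [Fin.snoc_castSucc]
        exact fun h => hnot m (Finset.mem_insert_of_mem h)
    -- cylinder identification
    have hD : ∀ b : Bool,
        {ω : E → Bool | ∀ m : Fin (n+1), ω ((Fin.snoc e e₀ : Fin (n+1) → E) m) = (Fin.snoc i b : Fin (n+1) → Bool) m}
          = {ω | ω e₀ = b} ∩ C := by
      intro b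
      ext ω
      simp only [Set.mem_setOf_eq, Set.mem_inter_iff, hCdef]
      constructor
      · intro h
        refine ⟨by simpa using h (Fin.last n), fun m => by simpa using h m.castSucc⟩
      · rintro ⟨h0, h⟩ m
        induction m using Fin.lastCases with
        | last => simpa using h0
        | cast m => simpa using h m
    set C1 : Set (E → Bool) := {ω | ω e₀ = true} ∩ C with hC1def
    set C0 : Set (E → Bool) := {ω | ω e₀ = false} ∩ C with hC0def
    have hT : MeasurableSet {ω : E → Bool | ω e₀ = true} := by
      have h1 : {ω : E → Bool | ω e₀ = true} = (fun ω : E → Bool => ω e₀) ⁻¹' {true} := by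
        ext ω; simp
      rw [h1]
      exact measurable_pi_apply e₀ (measurableSet_singleton true)
    -- split measure
    have hdiffC : ∀ s : Set (E → Bool),
        s \ {ω | ω e₀ = true} = {ω | ω e₀ = false} ∩ s := by
      intro s; ext ω
      simp only [Set.mem_diff, Set.mem_setOf_eq, Set.mem_inter_iff, Bool.not_eq_true,
        and_comm]
    have hsplitC : μ C1 + μ C0 = μ C := by
      have h2 := measure_inter_add_diff (μ := μ) C hT
      rw [hdiffC, Set.inter_comm C] at h2
      exact h2
    have hAC1 : (A ∩ C) ∩ {ω | ω e₀ = true} = A1 ∩ C1 := by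
      ext ω
      simp only [Set.mem_inter_iff, Set.mem_setOf_eq, hC1def, hA1def]
      constructor
      · rintro ⟨⟨hωA, hωC⟩, hωe⟩
        refine ⟨?_, hωe, hωC⟩
        rwa [show Function.update ω e₀ true = ω by rw [← hωe]; exact Function.update_eq_self _ _]
      · rintro ⟨hωA, hωe, hωC⟩
        refine ⟨⟨?_, hωC⟩, hωe⟩
        rwa [show Function.update ω e₀ true = ω by rw [← hωe]; exact Function.update_eq_self _ _] at hωA
    have hAC0 : (A ∩ C) \ {ω | ω e₀ = true} = A0 ∩ C0 := by
      rw [hdiffC]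
      ext ω
      simp only [Set.mem_inter_iff, Set.mem_setOf_eq, hC0def, hA0def]
      constructor
      · rintro ⟨hωe, hωA, hωC⟩
        refine ⟨?_, hωe, hωC⟩
        rwa [show Function.update ω e₀ false = ω by rw [← hωe]; exact Function.update_eq_self _ _]
      · rintro ⟨hωA, hωe, hωC⟩
        refine ⟨hωe, ?_, hωC⟩
        rwa [show Function.update ω e₀ false = ω by rw [← hωe]; exact Function.update_eq_self _ _] at hωA
    have hsplitA : μ (A ∩ C) = μ (A1 ∩ C1) + μ (A0 ∩ C0) := by
      rw [← hAC1, ← hAC0, measure_inter_add_diff _ hT]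
    -- properties of A1, A0
    have hincr : ∀ b : Bool, ∀ ω ω' : E → Bool, (∀ x, ω x = true → ω' x = true) →
        Function.update ω e₀ b ∈ A → Function.update ω' e₀ b ∈ A := by
      intro b ω ω' h
      refine hA _ _ ?_
      intro x hx
      rcases eq_or_ne x e₀ with rfl | hxe
      · rwa [Function.update_self] at hx ⊢
      · rw [Function.update_of_ne hxe] at hx ⊢
        exact h x hx
    have hdet' : ∀ b : Bool, ∀ ω ω' : E → Bool, (∀ x ∈ F', ω x = ω' x) →
        (Function.update ω e₀ b ∈ A ↔ Function.update ω' e₀ b ∈ A) := by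
      intro b ω ω' h
      refine hdet _ _ ?_
      intro x hx
      rcases eq_or_ne x e₀ with rfl | hxe
      · rw [Function.update_self, Function.update_self]
      · rw [Function.update_of_ne hxe, Function.update_of_ne hxe]
        exact h x (by rcases Finset.mem_insert.mp hx with h' | h'; exact absurd h' hxe; exact h')
    -- apply IH
    have IH1 : (μ (A1 ∩ C1)).toReal ≤ (μ C1).toReal *
        ∑ G ∈ F'.powerset, p₀ ^ G.card * (1 - p₀) ^ (F'.card - G.card) *
          (if (fun x => decide (x ∈ G)) ∈ A1 then (1:ℝ) else 0) := by
      have h := ih A1 (hincr true) (hdet' true) (n+1) (Fin.snoc e e₀) hinj' hnot'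
        (Fin.snoc i true)
      rw [hD true] at h
      exact h
    have IH0 : (μ (A0 ∩ C0)).toReal ≤ (μ C0).toReal *
        ∑ G ∈ F'.powerset, p₀ ^ G.card * (1 - p₀) ^ (F'.card - G.card) *
          (if (fun x => decide (x ∈ G)) ∈ A0 then (1:ℝ) else 0) := by
      have h := ih A0 (hincr false) (hdet' false) (n+1) (Fin.snoc e e₀) hinj' hnot'
        (Fin.snoc i false)
      rw [hD false] at h
      exact h
    -- conditional bound
    have hcb : μ C1 ≤ ENNReal.ofReal p₀ * μ C := by
      have h := hcond n (Fin.snoc e e₀) hinj' i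
      simp only [Fin.snoc_last, Fin.snoc_castSucc] at h
      have hset : {ω : E → Bool | ω e₀ = true ∧ ∀ m : Fin n, ω (e m) = i m} = C1 := by
        ext ω; simp [hC1def, hCdef, Set.mem_inter_iff]
      rw [hset] at h
      rw [← ENNReal.div_le_iff_le_mul (Or.inr ENNReal.ofReal_ne_top)
        (Or.inl (measure_ne_top μ _))]
      exact h
    -- pass to reals
    set S1 : ℝ := ∑ G ∈ F'.powerset, p₀ ^ G.card * (1 - p₀) ^ (F'.card - G.card) *
      (if (fun x => decide (x ∈ G)) ∈ A1 then (1:ℝ) else 0) with hS1def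
    set S0 : ℝ := ∑ G ∈ F'.powerset, p₀ ^ G.card * (1 - p₀) ^ (F'.card - G.card) *
      (if (fun x => decide (x ∈ G)) ∈ A0 then (1:ℝ) else 0) with hS0def
    have hc1 : (μ C1).toReal ≤ p₀ * (μ C).toReal := by
      have := ENNReal.toReal_mono (by
        exact ENNReal.mul_ne_top ENNReal.ofReal_ne_top (measure_ne_top μ _)) hcb
      rwa [ENNReal.toReal_mul, ENNReal.toReal_ofReal hp₀] at this
    have hcadd : (μ C1).toReal + (μ C0).toReal = (μ C).toReal := by
      rw [← ENNReal.toReal_add (measure_ne_top μ _) (measure_ne_top μ _), hsplitC]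
    have hmadd : (μ (A ∩ C)).toReal = (μ (A1 ∩ C1)).toReal + (μ (A0 ∩ C0)).toReal := by
      rw [← ENNReal.toReal_add (measure_ne_top μ _) (measure_ne_top μ _), hsplitA]
    -- S0 ≤ S1
    have hupd : ∀ G : Finset E, (fun x => decide (x ∈ G)) ∈ A0 →
        (fun x => decide (x ∈ G)) ∈ A1 := by
      intro G hG
      refine hA _ _ ?_ hG
      intro x hx
      rcases eq_or_ne x e₀ with rfl | hxe
      · rw [Function.update_self]
      · rw [Function.update_of_ne hxe] at hx ⊢
        exact hx
    have hS01 : S0 ≤ S1 := by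
      refine Finset.sum_le_sum ?_
      intro G _
      have h1 : (0:ℝ) ≤ p₀ ^ G.card * (1 - p₀) ^ (F'.card - G.card) :=
        mul_nonneg (pow_nonneg hp₀ _) (pow_nonneg (by linarith) _)
      by_cases hG : (fun x => decide (x ∈ G)) ∈ A0
      · simp [hG, hupd G hG]
      · simp only [hG, if_false, mul_zero]
        split
        · exact mul_nonneg h1 zero_le_one
        · simp
    have hS0nn : 0 ≤ S0 := by
      refine Finset.sum_nonneg ?_
      intro G _
      have h1 : (0:ℝ) ≤ p₀ ^ G.card * (1 - p₀) ^ (F'.card - G.card) :=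
        mul_nonneg (pow_nonneg hp₀ _) (pow_nonneg (by linarith) _)
      split
      · exact mul_nonneg h1 zero_le_one
      · simp
    -- combination identity
    have hcomb : ∑ G ∈ (insert e₀ F').powerset,
        p₀ ^ G.card * (1 - p₀) ^ ((insert e₀ F').card - G.card) *
          (if (fun x => decide (x ∈ G)) ∈ A then (1:ℝ) else 0)
        = p₀ * S1 + (1 - p₀) * S0 := by
      rw [Finset.sum_powerset_insert he₀, hS1def, hS0def, Finset.mul_sum, Finset.mul_sum,
        add_comm]
      congr 1
      · refine Finset.sum_congr rfl ?_
        intro G hG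
        have hGF : G ⊆ F' := Finset.mem_powerset.mp hG
        have he₀G : e₀ ∉ G := fun h => he₀ (hGF h)
        have hcard : G.card ≤ F'.card := Finset.card_le_card hGF
        have hcards : (insert e₀ F').card - (insert e₀ G).card = F'.card - G.card := by
          rw [Finset.card_insert_of_notMem he₀, Finset.card_insert_of_notMem he₀G]; omega
        have hchi : (fun x => decide (x ∈ insert e₀ G)) ∈ A ↔ (fun x => decide (x ∈ G)) ∈ A1 := by
          rw [hA1def, Set.mem_setOf_eq,
            show Function.update (fun x => decide (x ∈ G)) e₀ true = fun x => decide (x ∈ insert e₀ G) by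
              funext x
              rcases eq_or_ne x e₀ with rfl | hxe
              · simp
              · rw [Function.update_of_ne hxe]
                simp [Finset.mem_insert, hxe]]
        rw [hcards, Finset.card_insert_of_notMem he₀G, pow_succ]
        by_cases h : (fun x => decide (x ∈ G)) ∈ A1
        · simp only [hchi.mpr h, h, if_true]; ring
        · rw [if_neg (fun hh => h (hchi.mp hh)), if_neg h]; ring
      · refine Finset.sum_congr rfl ?_
        intro G hG
        have hGF : G ⊆ F' := Finset.mem_powerset.mp hG
        have he₀G : e₀ ∉ G := fun h => he₀ (hGF h)
        have hcard : G.card ≤ F'.card := Finset.card_le_card hGF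
        have hcards : (insert e₀ F').card - G.card = (F'.card - G.card) + 1 := by
          rw [Finset.card_insert_of_notMem he₀]; omega
        have hchi : (fun x => decide (x ∈ G)) ∈ A ↔ (fun x => decide (x ∈ G)) ∈ A0 := by
          rw [hA0def, Set.mem_setOf_eq,
            show Function.update (fun x => decide (x ∈ G)) e₀ false = fun x => decide (x ∈ G) by
              funext x
              rcases eq_or_ne x e₀ with rfl | hxe
              · simp [he₀G]
              · rw [Function.update_of_ne hxe]]
        rw [hcards, pow_succ]
        by_cases h : (fun x => decide (x ∈ G)) ∈ A0
        · simp only [hchi.mpr h, h, if_true]; ring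
        · rw [if_neg (fun hh => h (hchi.mp hh)), if_neg h]; ring
    rw [hcomb, hmadd]
    have hc0 : (0:ℝ) ≤ (μ C0).toReal := ENNReal.toReal_nonneg
    have hc1nn : (0:ℝ) ≤ (μ C1).toReal := ENNReal.toReal_nonneg
    nlinarith [mul_nonneg (sub_nonneg.mpr hc1) (sub_nonneg.mpr hS01), IH1, IH0,
      mul_le_mul_of_nonneg_left hS01 hc1nn]

open Classical in
/-- **Lemma (stochastic domination by a product measure).**
Let `E` be a countable set and `μ` a probability measure on `{-1,1}^E` (encoded as
`E → Bool`, `true` standing for `+1`, with the product σ-algebra).  Suppose there exists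
`p₀ ∈ [0,1]` such that every cylinder event has positive probability and, conditionally
on the states of any finitely many coordinates, each further coordinate is open (`= 1`)
with probability at most `p₀`.  Then for every increasing event `A` depending on only
finitely many coordinates — say determined by the coordinates in a finite set `F` —
one has `μ[A] ≤ 𝐏_{p₀}[A]`, where `𝐏_{p₀}[A]` is written out as the corresponding
finite sum `∑_{G⊆F} p₀^{|G|} (1-p₀)^{|F|-|G|} 1_A(1_G)` over the product Bernoulli
measure of parameter `p₀`. -/
theorem domination_by_product_measure {E : Type*} [Countable E] [DecidableEq E]
    (μ : Measure (E → Bool)) [IsProbabilityMeasure μ]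
    (p₀ : ℝ) (hp₀ : 0 ≤ p₀) (hp₁ : p₀ ≤ 1)
    (hpos : ∀ (n : ℕ) (e : Fin n → E), Function.Injective e → ∀ i : Fin n → Bool,
      0 < μ {ω | ∀ m : Fin n, ω (e m) = i m})
    (hcond : ∀ (n : ℕ) (e : Fin (n + 1) → E), Function.Injective e →
      ∀ i : Fin n → Bool,
        μ {ω | ω (e (Fin.last n)) = true ∧ ∀ m : Fin n, ω (e m.castSucc) = i m} /
            μ {ω | ∀ m : Fin n, ω (e m.castSucc) = i m}
          ≤ ENNReal.ofReal p₀) :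
    ∀ A : Set (E → Bool),
      (∀ ω ω' : E → Bool, (∀ e, ω e = true → ω' e = true) → ω ∈ A → ω' ∈ A) →
      ∀ F : Finset E,
        (∀ ω ω' : E → Bool, (∀ e ∈ F, ω e = ω' e) → (ω ∈ A ↔ ω' ∈ A)) →
        (μ A).toReal ≤ ∑ G ∈ F.powerset,
          p₀ ^ G.card * (1 - p₀) ^ (F.card - G.card) *
            (if (fun e => decide (e ∈ G)) ∈ A then (1 : ℝ) else 0) := by
  intro A hA F hdet
  have h := dom_aux μ p₀ hp₀ hp₁ hcond F A hA hdet 0 (fun m => m.elim0)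
    (fun m => m.elim0) (fun m => m.elim0) (fun m => m.elim0)
  have huniv : {ω : E → Bool | ∀ m : Fin 0,
      ω ((fun m : Fin 0 => m.elim0) m) = (fun m : Fin 0 => m.elim0 : Fin 0 → Bool) m}
        = Set.univ := by
    ext ω; simp
  rw [huniv, Set.inter_univ, measure_univ] at h
  simpa using h
end

section
/- Let I be a nonempty finite set, and let (x_i)_{i∈I} and (y_i)_{i∈I} be {0,1}-valued random variables on a common probability space such that almost surely y_i ≤ x_i for all i ∈ I. Set X = ∑_{i∈I} x_i and Y = ∑_{i∈I} y_i. Suppose there is a constant a ∈ (0,1] such that for every i ∈ I and every J ⊆ I∖{i}: 𝐏[ y_i = 1 and y_j = 0 for all j ∈ J ] ≥ a · 𝐏[ x_i = 1 and y_j = 0 for all j ∈ J ]. Then 𝐏[ Y = 0 and X > 0 ] ≤ (1/a) · 𝐄[ exp(−a·X/e) · 1_{X > 0} ], where e is Euler's number. Equivalently, if 𝐏[X>0] > 0 then 𝐏[Y = 0 | X > 0] ≤ (1/a)·𝐄[exp(−a·X/e) | X > 0]. -/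
/-!
Put `X = ∑ xᵢ`, `Y = ∑ yᵢ` and `t = e⁻¹`. Expanding
`t ^ (Y - yᵢ) = ∏_{j ≠ i} (t + (1 - t) 1_{yⱼ = 0})` writes it as a nonnegative combination of the
indicators of the events `{yⱼ = 0 ∀ j ∈ J}`, `J ⊆ I ∖ {i}`, so the correlation hypothesis gives
`a 𝐄[xᵢ t^(Y - yᵢ)] ≤ 𝐄[yᵢ t^(Y - yᵢ)]`. As `t^Y ≤ t^(Y - yᵢ)` and `yᵢ t^Y = t yᵢ t^(Y - yᵢ)`,
summing over `i` yields `𝐄[(Y - aX/e) e^(-Y)] ≥ 0`. It remains to integrate the pointwise bound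
`1_{Y = 0, X > 0} + (Y - aX/e) e^(-Y) ≤ a⁻¹ e^(-aX/e) 1_{X > 0}`, an instance of `a v ≤ e^(v - 1)`.
-/

open MeasureTheory Finset

theorem mul_le_exp_sub_one {a : ℝ} (ha0 : 0 ≤ a) (ha1 : a ≤ 1) (v : ℝ) :
    a * v ≤ Real.exp (v - 1) := by
  rcases le_or_gt v 0 with hv | hv
  · exact (mul_nonpos_of_nonneg_of_nonpos ha0 hv).trans (Real.exp_pos _).le
  · nlinarith [Real.add_one_le_exp (v - 1)]

theorem ite_add_sub_mul_exp_neg_le {a : ℝ} (ha0 : 0 < a) (ha1 : a ≤ 1) (k u : ℝ) :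
    (if k = 0 then 1 else 0) + (k - u) * Real.exp (-k) ≤ 1 / a * Real.exp (-u) := by
  rw [one_div, inv_mul_eq_div, le_div_iff₀' ha0]
  split_ifs with hk
  · subst hk
    simpa [sub_eq_add_neg] using mul_le_exp_sub_one ha0.le ha1 (1 - u)
  · calc a * (0 + (k - u) * Real.exp (-k)) = a * (k - u) * Real.exp (-k) := by ring
      _ ≤ Real.exp (k - u) * Real.exp (-k) := by
        gcongr
        exact (mul_le_exp_sub_one ha0.le ha1 _).trans (Real.exp_le_exp.2 (by linarith))
      _ = Real.exp (-u) := by rw [← Real.exp_add]; ring_nf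

theorem Finset.prod_ite_eq_sum_powerset {ι R : Type*} [CommRing R] (p : ι → Prop)
    [DecidablePred p] (t : R) (S : Finset ι) :
    ∏ j ∈ S, (if p j then t else 1)
      = ∑ J ∈ S.powerset, (1 - t) ^ #J * t ^ (#S - #J) * if ∀ j ∈ J, ¬ p j then 1 else 0 := by
  classical
  have hfac : ∀ j, (if p j then t else 1) = (1 - t) * (if ¬ p j then 1 else 0) + t := by
    intro j; split_ifs <;> ring
  simp_rw [hfac, prod_add, prod_mul_distrib, prod_const, prod_boole]
  refine sum_congr rfl fun J hJ => ?_
  rw [card_sdiff_of_subset (mem_powerset.mp hJ)]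
  ring

theorem MeasureTheory.Integrable.of_factorsThrough_finite {Ω α E : Type*} [MeasurableSpace Ω]
    {μ : Measure Ω} [IsFiniteMeasure μ] [NormedAddCommGroup E] [Finite α] [MeasurableSpace α]
    [MeasurableSingletonClass α] {Z : Ω → α} (hZ : Measurable Z) {f : Ω → E}
    (hf : f.FactorsThrough Z) : Integrable f μ := by
  have : f = Function.extend Z f 0 ∘ Z := funext fun ω => (hf.extend_apply 0 ω).symm
  rw [this]
  exact Integrable.of_finite.comp_measurable hZ

section BoolFamilies

variable {Ω I : Type*}

def countTrue [Fintype I] (x : I → Ω → Bool) (ω : Ω) : ℝ :=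
  ∑ i, if x i ω = true then 1 else 0

def weight (t : ℝ) (y : I → Ω → Bool) (S : Finset I) (ω : Ω) : ℝ :=
  ∏ j ∈ S, if y j ω = true then t else 1

theorem weight_nonneg {t : ℝ} (ht : 0 ≤ t) (y : I → Ω → Bool) (S : Finset I) (ω : Ω) :
    0 ≤ weight t y S ω :=
  prod_nonneg fun _ _ => by split_ifs <;> positivity

theorem weight_exp_neg_one [Fintype I] (y : I → Ω → Bool) (ω : Ω) :
    weight (Real.exp (-1)) y univ ω = Real.exp (-countTrue y ω) := by
  rw [countTrue, ← sum_neg_distrib, Real.exp_sum]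
  exact prod_congr rfl fun j _ => by split_ifs <;> simp

theorem countTrue_eq_zero_iff [Fintype I] {x : I → Ω → Bool} {ω : Ω} :
    countTrue x ω = 0 ↔ ∀ i, x i ω = false := by
  rw [countTrue, sum_eq_zero_iff_of_nonneg fun i _ => by split_ifs <;> norm_num]
  simp

theorem indicator_add_sub_mul_exp_le [Fintype I] {x y : I → Ω → Bool} {ω : Ω}
    (hω : ∀ i, y i ω = true → x i ω = true) {a : ℝ} (ha0 : 0 < a) (ha1 : a ≤ 1) :
    {ω | (∀ i, y i ω = false) ∧ ∃ i, x i ω = true}.indicator 1 ω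
        + (countTrue y ω - a * countTrue x ω / Real.exp 1) * Real.exp (-countTrue y ω)
      ≤ 1 / a * if ∃ i, x i ω = true then
          Real.exp (-(a * countTrue x ω / Real.exp 1)) else 0 := by
  by_cases hx : ∃ i, x i ω = true
  · simpa only [Set.indicator_apply, Set.mem_ofPred_eq, hx, and_true, if_true, Pi.one_apply,
      ← countTrue_eq_zero_iff] using ite_add_sub_mul_exp_neg_le ha0 ha1 (countTrue y ω)
        (a * countTrue x ω / Real.exp 1)
  · have hx0 : ∀ i, x i ω = false := by simpa using hx
    have hy0 : ∀ i, y i ω = false := fun i => by simpa [hx0 i] using mt (hω i)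
    simp [hx, countTrue_eq_zero_iff.2 hx0, countTrue_eq_zero_iff.2 hy0]

variable [MeasurableSpace Ω] {μ : Measure Ω}

def CorrelationBound (μ : Measure Ω) (x y : I → Ω → Bool) (a : ℝ) : Prop :=
  ∀ (i : I) (J : Finset I), i ∉ J →
    ENNReal.ofReal a * μ {ω | x i ω = true ∧ ∀ j ∈ J, y j ω = false}
      ≤ μ {ω | y i ω = true ∧ ∀ j ∈ J, y j ω = false}

theorem integrable_of_factorsThrough_bool [Fintype I] [IsFiniteMeasure μ]
    {x y : I → Ω → Bool} (hmx : ∀ i, Measurable (x i)) (hmy : ∀ i, Measurable (y i))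
    {f : Ω → ℝ}
    (hf : ∀ ω ω', (∀ i, x i ω = x i ω') → (∀ i, y i ω = y i ω') → f ω = f ω') :
    Integrable f μ := by
  refine Integrable.of_factorsThrough_finite
    ((measurable_pi_lambda _ hmx).prodMk (measurable_pi_lambda _ hmy)) fun ω ω' h => ?_
  simp only [Prod.ext_iff, funext_iff] at h
  exact hf ω ω' h.1 h.2

theorem integral_ite_weight [IsFiniteMeasure μ] {b : Ω → Bool} (hb : Measurable b)
    {y : I → Ω → Bool} (hy : ∀ j, Measurable (y j)) (t : ℝ) (S : Finset I) :
    ∫ ω, (if b ω = true then weight t y S ω else 0) ∂μ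
      = ∑ J ∈ S.powerset, (1 - t) ^ #J * t ^ (#S - #J) *
          μ.real {ω | b ω = true ∧ ∀ j ∈ J, y j ω = false} := by
  have hA : ∀ J : Finset I, MeasurableSet {ω | b ω = true ∧ ∀ j ∈ J, y j ω = false} :=
    fun J => by
      simp only [Set.ofPred_and, Set.ofPred_forall]
      exact (hb (measurableSet_singleton _)).inter
        (J.measurableSet_biInter fun j _ => hy j (measurableSet_singleton _))
  have hpt : ∀ ω, (if b ω = true then weight t y S ω else 0) = ∑ J ∈ S.powerset,
      (1 - t) ^ #J * t ^ (#S - #J) *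
        {ω | b ω = true ∧ ∀ j ∈ J, y j ω = false}.indicator 1 ω := by
    intro ω
    rw [weight, prod_ite_eq_sum_powerset]
    by_cases hbω : b ω = true <;> simp [hbω, Set.indicator_apply]
  simp_rw [hpt]
  rw [integral_finsetSum _ fun J _ => ((integrable_const 1).indicator (hA J)).const_mul _]
  simp_rw [integral_const_mul, integral_indicator_one (hA _)]

theorem mul_integral_ite_weight_le [IsFiniteMeasure μ] {x y : I → Ω → Bool}
    (hmx : ∀ i, Measurable (x i)) (hmy : ∀ i, Measurable (y i)) {a : ℝ} (ha0 : 0 ≤ a)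
    (hcorr : CorrelationBound μ x y a)
    {t : ℝ} (ht0 : 0 ≤ t) (ht1 : t ≤ 1) {i : I} {S : Finset I} (hiS : i ∉ S) :
    a * ∫ ω, (if x i ω = true then weight t y S ω else 0) ∂μ
      ≤ ∫ ω, (if y i ω = true then weight t y S ω else 0) ∂μ := by
  rw [integral_ite_weight (hmx i) hmy, integral_ite_weight (hmy i) hmy, mul_sum]
  refine sum_le_sum fun J hJ => ?_
  have h := ENNReal.toReal_mono (measure_ne_top μ _)
    (hcorr i J fun hiJ => hiS (mem_powerset.1 hJ hiJ))
  rw [ENNReal.toReal_mul, ENNReal.toReal_ofReal ha0] at h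
  have : 0 ≤ 1 - t := sub_nonneg.2 ht1
  rw [mul_left_comm]
  exact mul_le_mul_of_nonneg_left h (by positivity)

theorem mul_integral_countTrue_mul_weight_le [Fintype I] [IsFiniteMeasure μ]
    {x y : I → Ω → Bool} (hmx : ∀ i, Measurable (x i)) (hmy : ∀ i, Measurable (y i))
    {a : ℝ} (ha0 : 0 ≤ a)
    (hcorr : CorrelationBound μ x y a)
    {t : ℝ} (ht0 : 0 ≤ t) (ht1 : t ≤ 1) :
    a * t * ∫ ω, countTrue x ω * weight t y univ ω ∂μ
      ≤ ∫ ω, countTrue y ω * weight t y univ ω ∂μ := by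
  classical
  have hint : ∀ {b : I → Ω → Bool}, (∀ i, Measurable (b i)) → ∀ i S,
      Integrable (fun ω => if b i ω = true then weight t y S ω else 0) μ :=
    fun hb _ _ => integrable_of_factorsThrough_bool hb hmy fun _ _ hbω hyω => by
      simp only [weight, hbω, hyω]
  have hsum : ∀ {b : I → Ω → Bool}, (∀ i, Measurable (b i)) →
      ∫ ω, countTrue b ω * weight t y univ ω ∂μ
        = ∑ i, ∫ ω, (if b i ω = true then weight t y univ ω else 0) ∂μ := by
    intro b hb
    simp_rw [countTrue, sum_mul, ite_mul, one_mul, zero_mul]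
    exact integral_finsetSum _ fun i _ => hint hb i univ
  have hsplit : ∀ i ω, weight t y univ ω
      = (if y i ω = true then t else 1) * weight t y (univ.erase i) ω :=
    fun i ω => (mul_prod_erase univ _ (mem_univ i)).symm
  have hx : ∀ i ω, (if x i ω = true then weight t y univ ω else 0)
      ≤ if x i ω = true then weight t y (univ.erase i) ω else 0 := by
    intro i ω
    split_ifs
    · rw [hsplit i]
      exact mul_le_of_le_one_left (weight_nonneg ht0 _ _ _) (by split_ifs <;> simp [ht1])
    · rfl
  have hy : ∀ i ω, (if y i ω = true then weight t y univ ω else 0)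
      = t * if y i ω = true then weight t y (univ.erase i) ω else 0 := by
    intro i ω
    split_ifs with h
    · rw [hsplit i, if_pos h]
    · rw [mul_zero]
  calc a * t * ∫ ω, countTrue x ω * weight t y univ ω ∂μ
      = t * ∑ i, a * ∫ ω, (if x i ω = true then weight t y univ ω else 0) ∂μ := by
        rw [hsum hmx, mul_sum, mul_sum]
        exact sum_congr rfl fun _ _ => by ring
    _ ≤ t * ∑ i, a * ∫ ω, (if x i ω = true then weight t y (univ.erase i) ω else 0) ∂μ := by
        refine mul_le_mul_of_nonneg_left (sum_le_sum fun i _ => ?_) ht0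
        exact mul_le_mul_of_nonneg_left
          (integral_mono (hint hmx i _) (hint hmx i _) (hx i)) ha0
    _ ≤ t * ∑ i, ∫ ω, (if y i ω = true then weight t y (univ.erase i) ω else 0) ∂μ := by
        gcongr with i
        exact mul_integral_ite_weight_le hmx hmy ha0 hcorr ht0 ht1 (notMem_erase i univ)
    _ = ∫ ω, countTrue y ω * weight t y univ ω ∂μ := by
        rw [hsum hmy, mul_sum]
        simp_rw [hy, integral_const_mul]

theorem integral_sub_mul_exp_neg_countTrue_nonneg [Fintype I] [IsFiniteMeasure μ]
    {x y : I → Ω → Bool} (hmx : ∀ i, Measurable (x i)) (hmy : ∀ i, Measurable (y i))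
    {a : ℝ} (ha0 : 0 ≤ a)
    (hcorr : ∀ (i : I) (J : Finset I), i ∉ J →
      ENNReal.ofReal a * μ {ω | x i ω = true ∧ ∀ j ∈ J, y j ω = false}
        ≤ μ {ω | y i ω = true ∧ ∀ j ∈ J, y j ω = false}) :
    0 ≤ ∫ ω, (countTrue y ω - a * countTrue x ω / Real.exp 1)
      * Real.exp (-countTrue y ω) ∂μ := by
  have key := mul_integral_countTrue_mul_weight_le hmx hmy ha0 hcorr (Real.exp_pos (-1)).le
    (Real.exp_le_one_iff.2 (by norm_num))
  simp_rw [weight_exp_neg_one] at key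
  have hXW : Integrable (fun ω => countTrue x ω * Real.exp (-countTrue y ω)) μ :=
    integrable_of_factorsThrough_bool hmx hmy fun _ _ hx hy => by simp only [countTrue, hx, hy]
  have hYW : Integrable (fun ω => countTrue y ω * Real.exp (-countTrue y ω)) μ :=
    integrable_of_factorsThrough_bool hmx hmy fun _ _ _ hy => by simp only [countTrue, hy]
  have h : ∀ ω, (countTrue y ω - a * countTrue x ω / Real.exp 1) * Real.exp (-countTrue y ω)
      = countTrue y ω * Real.exp (-countTrue y ω)
        - a * Real.exp (-1) * (countTrue x ω * Real.exp (-countTrue y ω)) := fun ω => by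
    rw [Real.exp_neg 1]; ring
  simp_rw [h]
  rw [integral_sub hYW (hXW.const_mul _), integral_const_mul]
  linarith

end BoolFamilies

theorem large_deviation_bound_general {I : Type*} [Fintype I]
    {Ω : Type*} [MeasurableSpace Ω] (μ : Measure Ω) [IsProbabilityMeasure μ]
    (x y : I → Ω → Bool)
    (hmx : ∀ i, Measurable (x i)) (hmy : ∀ i, Measurable (y i))
    (hyx : ∀ᵐ ω ∂μ, ∀ i, y i ω = true → x i ω = true)
    (a : ℝ) (ha0 : 0 < a) (ha1 : a ≤ 1)
    (hcorr : ∀ (i : I) (J : Finset I), i ∉ J →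
      ENNReal.ofReal a * μ {ω | x i ω = true ∧ ∀ j ∈ J, y j ω = false}
        ≤ μ {ω | y i ω = true ∧ ∀ j ∈ J, y j ω = false}) :
    (μ {ω | (∀ i, y i ω = false) ∧ ∃ i, x i ω = true}).toReal
      ≤ (1 / a) * ∫ ω, (if ∃ i, x i ω = true then
            Real.exp (-(a * (∑ i, if x i ω = true then (1 : ℝ) else 0) / Real.exp 1))
          else 0) ∂μ := by
  set S := {ω | (∀ i, y i ω = false) ∧ ∃ i, x i ω = true}
  set correction := fun ω =>
    (countTrue y ω - a * countTrue x ω / Real.exp 1) * Real.exp (-countTrue y ω)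
  have hS : MeasurableSet S := by measurability
  have hind : Integrable (S.indicator (1 : Ω → ℝ)) μ := (integrable_const 1).indicator hS
  have hcorrection : Integrable correction μ :=
    integrable_of_factorsThrough_bool hmx hmy fun _ _ hx hy => by
      simp only [correction, countTrue, hx, hy]
  calc μ.real S ≤ μ.real S + ∫ ω, correction ω ∂μ :=
        le_add_of_nonneg_right (integral_sub_mul_exp_neg_countTrue_nonneg hmx hmy ha0.le hcorr)
    _ = ∫ ω, (S.indicator 1 ω + correction ω) ∂μ := by
        rw [integral_add hind hcorrection, integral_indicator_one hS]
    _ ≤ ∫ ω, 1 / a * (if ∃ i, x i ω = true then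
          Real.exp (-(a * countTrue x ω / Real.exp 1)) else 0) ∂μ :=
        integral_mono_ae (hind.add hcorrection)
          ((integrable_of_factorsThrough_bool hmx hmy fun _ _ hx _ => by
            simp only [countTrue, hx]).const_mul _)
          (hyx.mono fun ω hω => indicator_add_sub_mul_exp_le hω ha0 ha1)
    _ = _ := integral_const_mul _ _

/-- **Lemma (large deviation bound, [GPS Proposition 6.1]).**
Let `I` be a nonempty finite set and let `(x_i)`, `(y_i)` be `{0,1}`-valued random
variables (encoded as `Bool`-valued, `true` = `1`) with `y_i ≤ x_i` almost surely.  Set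
`X = ∑ x_i` and `Y = ∑ y_i`.  If there is `a ∈ (0,1]` such that for every `i` and
every `J ⊆ I∖{i}` one has
`𝐏[y_i = 1, y_j = 0 ∀j∈J] ≥ a·𝐏[x_i = 1, y_j = 0 ∀j∈J]`, then
`𝐏[Y = 0, X > 0] ≤ (1/a)·𝐄[exp(-a·X/e)·1_{X>0}]`. -/
theorem large_deviation_bound {I : Type*} [Fintype I] [Nonempty I]
    {Ω : Type*} [MeasurableSpace Ω] (μ : Measure Ω) [IsProbabilityMeasure μ]
    (x y : I → Ω → Bool)
    (hmx : ∀ i, Measurable (x i)) (hmy : ∀ i, Measurable (y i))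
    (hyx : ∀ᵐ ω ∂μ, ∀ i, y i ω = true → x i ω = true)
    (a : ℝ) (ha0 : 0 < a) (ha1 : a ≤ 1)
    (hcorr : ∀ (i : I) (J : Finset I), i ∉ J →
      ENNReal.ofReal a * μ {ω | x i ω = true ∧ ∀ j ∈ J, y j ω = false}
        ≤ μ {ω | y i ω = true ∧ ∀ j ∈ J, y j ω = false}) :
    (μ {ω | (∀ i, y i ω = false) ∧ ∃ i, x i ω = true}).toReal
      ≤ (1 / a) * ∫ ω, (if ∃ i, x i ω = true then
            Real.exp (-(a * (∑ i, if x i ω = true then (1 : ℝ) else 0) / Real.exp 1))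
          else 0) ∂μ :=
  large_deviation_bound_general μ x y hmx hmy hyx a ha0 ha1 hcorr
end
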